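/- arXiv:1903.09055 — 2 statements merged into one kernel-verified Lean document; each statement's English description precedes it below -/
import Mathlib

section
/- Let u : [0,1] → ℝ be upper semicontinuous, let w := cav u be continuous, and let (vₙ) be a sequence of functions [0,1] → ℝ with u ≤ vₙ ≤ w, converging uniformly to w. Fix p₀ ∈ [0,1] and define pₙ⁻ := sup{p ∈ [0,p₀] : vₙ(p) = u(p)} and P⁻ := sup{p ∈ [0,p₀] : w(p) = u(p)} (all sets nonempty, and assume the sequence pₙ⁻ is monotonically decreasing). Then pₙ⁻ → P⁻. -/
/-- The concave envelope of `u` on `[0,1]`: the pointwise infimum of all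
concave functions on `[0,1]` majorising `u` there. -/
noncomputable def cavEnv (u : ℝ → ℝ) : ℝ → ℝ := fun p =>
  sInf {y : ℝ | ∃ g : ℝ → ℝ, ConcaveOn ℝ (Set.Icc 0 1) g ∧
    (∀ q ∈ Set.Icc (0:ℝ) 1, u q ≤ g q) ∧ y = g p}

/-- As the value functions `vₙ` (squeezed between `u` and `w = cav u`)
converge uniformly to `w`, the long-run induced belief `pₙ⁻` converges to the
static-persuasion belief `P⁻`. -/
theorem longrun_belief_tendsto_persuasion_belief
    (u w : ℝ → ℝ) (v : ℕ → ℝ → ℝ)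
    (husc : UpperSemicontinuousOn u (Set.Icc 0 1))
    (hw : w = cavEnv u) (hwc : ContinuousOn w (Set.Icc 0 1))
    (hbound : ∀ n, ∀ p ∈ Set.Icc (0:ℝ) 1, u p ≤ v n p ∧ v n p ≤ w p)
    (hunif : TendstoUniformlyOn v w Filter.atTop (Set.Icc 0 1))
    (p₀ : ℝ) (hp₀ : p₀ ∈ Set.Icc (0:ℝ) 1)
    (hne : ∀ n, {p ∈ Set.Icc (0:ℝ) p₀ | v n p = u p}.Nonempty)
    (hneP : {p ∈ Set.Icc (0:ℝ) p₀ | w p = u p}.Nonempty)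
    (hanti : Antitone fun n => sSup {p ∈ Set.Icc (0:ℝ) p₀ | v n p = u p}) :
    Filter.Tendsto (fun n => sSup {p ∈ Set.Icc (0:ℝ) p₀ | v n p = u p})
      Filter.atTop (nhds (sSup {p ∈ Set.Icc (0:ℝ) p₀ | w p = u p})) := by
  classical
  set S : ℕ → Set ℝ := fun n => {p ∈ Set.Icc (0:ℝ) p₀ | v n p = u p} with hSdef
  set Sw : Set ℝ := {p ∈ Set.Icc (0:ℝ) p₀ | w p = u p} with hSwdef
  set pn : ℕ → ℝ := fun n => sSup (S n) with hpndef
  have hIcc : Set.Icc (0:ℝ) p₀ ⊆ Set.Icc 0 1 := Set.Icc_subset_Icc_right hp₀.2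
  have bdd : ∀ n, BddAbove (S n) := fun n => ⟨p₀, fun x hx => hx.1.2⟩
  have bddSw : BddAbove Sw := ⟨p₀, fun x hx => hx.1.2⟩
  have hsub : ∀ n, Sw ⊆ S n := by
    intro n p hp
    have h := hbound n p (hIcc hp.1)
    exact ⟨hp.1, le_antisymm (h.2.trans_eq hp.2) h.1⟩
  have hPle : ∀ n, sSup Sw ≤ pn n := fun n => csSup_le_csSup (bdd n) hneP (hsub n)
  have hbddB : BddBelow (Set.range pn) := ⟨sSup Sw, by rintro _ ⟨n, rfl⟩; exact hPle n⟩
  have htend : Filter.Tendsto pn Filter.atTop (nhds (⨅ n, pn n)) :=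
    tendsto_atTop_ciInf hanti hbddB
  set L : ℝ := ⨅ n, pn n with hLdef
  have hPL : sSup Sw ≤ L := le_ciInf hPle
  have h0P : (0:ℝ) ≤ sSup Sw := by
    obtain ⟨q, hq⟩ := hneP
    exact hq.1.1.trans (le_csSup bddSw hq)
  have hpnIcc : ∀ n, pn n ∈ Set.Icc (0:ℝ) p₀ := by
    intro n
    obtain ⟨q, hq⟩ := hne n
    exact ⟨hq.1.1.trans (le_csSup (bdd n) hq), csSup_le ⟨q, hq⟩ fun x hx => hx.1.2⟩
  have hLmemIcc : L ∈ Set.Icc (0:ℝ) p₀ :=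
    ⟨h0P.trans hPL, (ciInf_le hbddB 0).trans (hpnIcc 0).2⟩
  have hL1 : L ∈ Set.Icc (0:ℝ) 1 := hIcc hLmemIcc
  -- choose approximating points
  have hqex : ∀ n : ℕ, ∃ q ∈ S n, pn n - 1 / (n + 1) < q := by
    intro n
    exact exists_lt_of_lt_csSup (hne n) (sub_lt_self _ (by positivity))
  choose q hqS hqlt using hqex
  have hqle : ∀ n, q n ≤ pn n := fun n => le_csSup (bdd n) (hqS n)
  have hqtend : Filter.Tendsto q Filter.atTop (nhds L) := by
    have hlow : Filter.Tendsto (fun n : ℕ => pn n - 1 / (n + 1)) Filter.atTop (nhds L) := by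
      have := htend.sub tendsto_one_div_add_atTop_nhds_zero_nat
      simpa using this
    exact tendsto_of_tendsto_of_tendsto_of_le_of_le hlow htend
      (fun n => (hqlt n).le) hqle
  have hqmem : ∀ n, q n ∈ Set.Icc (0:ℝ) 1 := fun n => hIcc (hqS n).1
  have hqtend' : Filter.Tendsto q Filter.atTop (nhdsWithin L (Set.Icc 0 1)) :=
    tendsto_nhdsWithin_iff.mpr ⟨hqtend, Filter.Eventually.of_forall hqmem⟩
  have hwq : Filter.Tendsto (fun n => w (q n)) Filter.atTop (nhds (w L)) :=
    Filter.Tendsto.comp (hwc L hL1) hqtend'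
  -- w L ≤ u L
  have hwu : w L ≤ u L := by
    refine le_of_forall_pos_le_add ?_
    intro ε hε
    have husc' := husc L hL1 (u L + ε / 2) (by linarith)
    have ev1 : ∀ᶠ n in Filter.atTop, u (q n) < u L + ε / 2 := hqtend'.eventually husc'
    rw [Metric.tendstoUniformlyOn_iff] at hunif
    have ev2 := hunif (ε / 2) (by positivity)
    have ev3 : ∀ᶠ n in Filter.atTop, w (q n) ≤ u L + ε := by
      filter_upwards [ev1, ev2] with n h1 h2
      have h3 := h2 (q n) (hqmem n)
      rw [Real.dist_eq, abs_lt] at h3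
      have h4 : v n (q n) = u (q n) := (hqS n).2
      linarith [h3.2]
    exact le_of_tendsto hwq ev3
  have huw : u L ≤ w L := (hbound 0 L hL1).1.trans (hbound 0 L hL1).2
  have hLmem : L ∈ Sw := ⟨hLmemIcc, le_antisymm hwu huw⟩
  have hLP : L ≤ sSup Sw := le_csSup bddSw hLmem
  have hEq : L = sSup Sw := le_antisymm hLP hPL
  rw [← hEq]
  exact htend
end

section
/- Let u : [0,1] → ℝ be upper semicontinuous and bounded. Then for every p ∈ [0,1], the concave envelope satisfies cav u(p) = sup over all finitely supported probability measures μ on [0,1] with mean p of ∫ u dμ; moreover the supremum is attained by a measure supported on at most two points. -/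
open Set Finset

def KGsplits (u : ℝ → ℝ) (p : ℝ) : Set ℝ :=
  {y : ℝ | ∃ (n : ℕ) (q : Fin n → ℝ) (wgt : Fin n → ℝ),
    (∀ i, q i ∈ Set.Icc (0:ℝ) 1) ∧ (∀ i, 0 ≤ wgt i) ∧
    (∑ i, wgt i) = 1 ∧ (∑ i, wgt i * q i) = p ∧
    y = ∑ i, wgt i * u (q i)}

noncomputable def KGsup (u : ℝ → ℝ) : ℝ → ℝ := fun p => sSup (KGsplits u p)

lemma KG_self_mem {u : ℝ → ℝ} {p : ℝ} (hp : p ∈ Set.Icc (0:ℝ) 1) :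
    u p ∈ KGsplits u p := by
  refine ⟨1, fun _ => p, fun _ => 1, fun _ => hp, fun _ => zero_le_one, by simp, by simp, by simp⟩

lemma KG_le_of_concave {u g : ℝ → ℝ} {p : ℝ}
    (hg : ConcaveOn ℝ (Set.Icc 0 1) g) (hmaj : ∀ q ∈ Set.Icc (0:ℝ) 1, u q ≤ g q)
    {y : ℝ} (hy : y ∈ KGsplits u p) : y ≤ g p := by
  obtain ⟨n, q, w, hq, hw, hw1, hmean, rfl⟩ := hy
  have h1 : ∑ i, w i * u (q i) ≤ ∑ i, w i * g (q i) :=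
    Finset.sum_le_sum fun i _ => mul_le_mul_of_nonneg_left (hmaj (q i) (hq i)) (hw i)
  have h2 : ∑ i, w i • g (q i) ≤ g (∑ i, w i • q i) :=
    hg.le_map_sum (fun i _ => hw i) hw1 (fun i _ => hq i)
  simp only [smul_eq_mul] at h2
  rw [hmean] at h2
  exact h1.trans h2

lemma KG_le_bound {u : ℝ → ℝ} {M p : ℝ} (hM : ∀ q ∈ Set.Icc (0:ℝ) 1, |u q| ≤ M)
    {y : ℝ} (hy : y ∈ KGsplits u p) : y ≤ M := by
  obtain ⟨n, q, w, hq, hw, hw1, hmean, rfl⟩ := hy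
  calc ∑ i, w i * u (q i) ≤ ∑ i, w i * M :=
        Finset.sum_le_sum fun i _ => mul_le_mul_of_nonneg_left
          ((abs_le.mp (hM (q i) (hq i))).2) (hw i)
    _ = M := by rw [← Finset.sum_mul, hw1, one_mul]

lemma KG_bddAbove {u : ℝ → ℝ} {M p : ℝ} (hM : ∀ q ∈ Set.Icc (0:ℝ) 1, |u q| ≤ M) :
    BddAbove (KGsplits u p) := ⟨M, fun _ hy => KG_le_bound hM hy⟩

lemma KG_nonempty {u : ℝ → ℝ} {p : ℝ} (hp : p ∈ Set.Icc (0:ℝ) 1) :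
    (KGsplits u p).Nonempty := ⟨u p, KG_self_mem hp⟩

lemma KG_le_sup {u : ℝ → ℝ} {M p : ℝ} (hM : ∀ q ∈ Set.Icc (0:ℝ) 1, |u q| ≤ M)
    (hp : p ∈ Set.Icc (0:ℝ) 1) : u p ≤ KGsup u p :=
  le_csSup (KG_bddAbove hM) (KG_self_mem hp)

lemma KG_sup_le {u g : ℝ → ℝ} {p : ℝ} (hp : p ∈ Set.Icc (0:ℝ) 1)
    (hg : ConcaveOn ℝ (Set.Icc 0 1) g) (hmaj : ∀ q ∈ Set.Icc (0:ℝ) 1, u q ≤ g q) :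
    KGsup u p ≤ g p :=
  csSup_le (KG_nonempty hp) (fun _ hy => KG_le_of_concave hg hmaj hy)

lemma KG_combine {u : ℝ → ℝ} {x z a b y₁ y₂ : ℝ}
    (hy₁ : y₁ ∈ KGsplits u x) (hy₂ : y₂ ∈ KGsplits u z)
    (ha : 0 ≤ a) (hb : 0 ≤ b) (hab : a + b = 1) :
    a * y₁ + b * y₂ ∈ KGsplits u (a * x + b * z) := by
  obtain ⟨n, q, w, hq, hw, hw1, hmean, rfl⟩ := hy₁
  obtain ⟨m, r, v, hr, hv, hv1, hmean', rfl⟩ := hy₂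
  refine ⟨n + m, Fin.append q r, Fin.append (fun i => a * w i) (fun j => b * v j), ?_, ?_, ?_, ?_, ?_⟩
  · intro i
    refine Fin.addCases (fun i => ?_) (fun j => ?_) i
    · rw [Fin.append_left]; exact hq i
    · rw [Fin.append_right]; exact hr j
  · intro i
    refine Fin.addCases (fun i => ?_) (fun j => ?_) i
    · rw [Fin.append_left]; exact mul_nonneg ha (hw i)
    · rw [Fin.append_right]; exact mul_nonneg hb (hv j)
  · rw [Fin.sum_univ_add]
    simp only [Fin.append_left, Fin.append_right, ← Finset.mul_sum, hw1, hv1]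
    linarith
  · rw [Fin.sum_univ_add]
    simp only [Fin.append_left, Fin.append_right, mul_assoc, ← Finset.mul_sum, hmean, hmean']
  · rw [Fin.sum_univ_add]
    simp only [Fin.append_left, Fin.append_right, mul_assoc, ← Finset.mul_sum]

lemma KG_concave {u : ℝ → ℝ} {M : ℝ} (hM : ∀ q ∈ Set.Icc (0:ℝ) 1, |u q| ≤ M) :
    ConcaveOn ℝ (Set.Icc 0 1) (KGsup u) := by
  refine ⟨convex_Icc 0 1, ?_⟩
  intro x hx z hz a b ha hb hab
  simp only [smul_eq_mul]
  have hmem : a * x + b * z ∈ Set.Icc (0:ℝ) 1 := by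
    have := (convex_Icc (0:ℝ) 1) hx hz ha hb hab
    simpa using this
  rcases eq_or_lt_of_le ha with ha0 | ha0
  · have hb1 : b = 1 := by linarith
    simp [← ha0, hb1]
  rcases eq_or_lt_of_le hb with hb0 | hb0
  · have ha1 : a = 1 := by linarith
    simp [← hb0, ha1]
  have step : ∀ y₁ ∈ KGsplits u x, ∀ y₂ ∈ KGsplits u z,
      a * y₁ + b * y₂ ≤ KGsup u (a * x + b * z) := fun y₁ h₁ y₂ h₂ =>
    le_csSup (KG_bddAbove hM) (KG_combine h₁ h₂ ha hb hab)
  have step2 : ∀ y₁ ∈ KGsplits u x, a * y₁ + b * KGsup u z ≤ KGsup u (a * x + b * z) := by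
    intro y₁ h₁
    have : KGsup u z ≤ (KGsup u (a * x + b * z) - a * y₁) / b := by
      refine csSup_le (KG_nonempty hz) (fun y₂ h₂ => ?_)
      rw [le_div_iff₀ hb0]
      have := step y₁ h₁ y₂ h₂
      linarith
    rw [le_div_iff₀ hb0] at this
    linarith [this]
  have : KGsup u x ≤ (KGsup u (a * x + b * z) - b * KGsup u z) / a := by
    refine csSup_le (KG_nonempty hx) (fun y₁ h₁ => ?_)
    rw [le_div_iff₀ ha0]
    have := step2 y₁ h₁
    linarith
  rw [le_div_iff₀ ha0] at this
  linarith [this]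

lemma KG_cav_eq {u : ℝ → ℝ} {M : ℝ} (hM : ∀ q ∈ Set.Icc (0:ℝ) 1, |u q| ≤ M)
    {p : ℝ} (hp : p ∈ Set.Icc (0:ℝ) 1) :
    cavEnv u p = KGsup u p := by
  have hmajS : ∀ q ∈ Set.Icc (0:ℝ) 1, u q ≤ KGsup u q := fun q hq => KG_le_sup hM hq
  apply le_antisymm
  · refine csInf_le ⟨u p, fun y hy => ?_⟩ ⟨KGsup u, KG_concave hM, hmajS, rfl⟩
    obtain ⟨g, hg, hmaj, rfl⟩ := hy
    exact hmaj p hp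
  · refine le_csInf ⟨M, fun _ => M, concaveOn_const M (convex_Icc 0 1),
      fun q hq => (abs_le.mp (hM q hq)).2, rfl⟩ ?_
    rintro y ⟨g, hg, hmaj, rfl⟩
    exact KG_sup_le hp hg hmaj

lemma KG_lsc_min {K : Set ℝ} (hK : IsCompact K) (hne : K.Nonempty) {h : ℝ → ℝ}
    (hh : LowerSemicontinuousOn h K) : ∃ a ∈ K, ∀ x ∈ K, h a ≤ h x := by
  by_contra hcon
  push_neg at hcon
  choose! wit hwitK hwitlt using hcon
  have key : ∀ a ∈ K, {y | y ∈ K → h (wit a) < h y} ∈ nhds a := by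
    intro a ha
    have h1 : ∀ᶠ y in nhdsWithin a K, h (wit a) < h y := hh a ha (h (wit a)) (hwitlt a ha)
    rw [eventually_nhdsWithin_iff] at h1
    exact h1
  obtain ⟨t, htK, hcov⟩ := hK.elim_nhds_subcover (fun a => {y | y ∈ K → h (wit a) < h y}) key
  have htne : t.Nonempty := by
    obtain ⟨x0, hx0⟩ := hne
    have := hcov hx0
    simp only [Set.mem_iUnion] at this
    obtain ⟨a, hat, _⟩ := this
    exact ⟨a, hat⟩
  obtain ⟨a, hat, hamin⟩ := t.exists_min_image (fun a => h (wit a)) htne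
  have hwa : wit a ∈ K := hwitK a (htK a hat)
  have := hcov hwa
  simp only [Set.mem_iUnion] at this
  obtain ⟨b, hbt, hb⟩ := this
  have h2 : h (wit b) < h (wit a) := hb hwa
  have h3 : h (wit a) ≤ h (wit b) := hamin b hbt
  linarith

lemma KG_support {S : ℝ → ℝ} (hS : ConcaveOn ℝ (Set.Icc 0 1) S) {p : ℝ}
    (hp : p ∈ Set.Ioo (0:ℝ) 1) :
    ∃ c : ℝ, ∀ x ∈ Set.Icc (0:ℝ) 1, S x ≤ S p + c * (x - p) := by
  set E := (fun y => (S y - S p) / (y - p)) '' Set.Ioc p 1 with hE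
  have hpI : p ∈ Set.Icc (0:ℝ) 1 := ⟨hp.1.le, hp.2.le⟩
  have hne : E.Nonempty := ⟨_, ⟨1, ⟨hp.2, le_refl 1⟩, rfl⟩⟩
  have hslope : ∀ x ∈ Set.Icc (0:ℝ) 1, x < p → ∀ y ∈ Set.Ioc p (1:ℝ),
      (S y - S p) / (y - p) ≤ (S p - S x) / (p - x) := by
    intro x hx hxp y hy
    exact hS.slope_anti_adjacent hx ⟨hp.1.le.trans hy.1.le, hy.2⟩ hxp hy.1
  have hba : BddAbove E := by
    refine ⟨(S p - S 0) / (p - 0), ?_⟩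
    rintro e ⟨y, hy, rfl⟩
    exact hslope 0 ⟨le_refl 0, zero_le_one⟩ hp.1 y hy
  refine ⟨sSup E, fun x hx => ?_⟩
  rcases lt_trichotomy x p with hlt | heq | hgt
  · have h1 : sSup E ≤ (S p - S x) / (p - x) :=
      csSup_le hne (by rintro e ⟨y, hy, rfl⟩; exact hslope x hx hlt y hy)
    rw [le_div_iff₀ (by linarith : (0:ℝ) < p - x)] at h1
    nlinarith [h1]
  · rw [heq]; simp
  · have h1 : (S x - S p) / (x - p) ≤ sSup E := le_csSup hba ⟨x, ⟨hgt, hx.2⟩, rfl⟩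
    rw [div_le_iff₀ (by linarith : (0:ℝ) < x - p)] at h1
    linarith

lemma KG_gap_contra {u : ℝ → ℝ} {M p c d : ℝ} (hM : ∀ q ∈ Set.Icc (0:ℝ) 1, |u q| ≤ M)
    (hpI : p ∈ Set.Icc (0:ℝ) 1) (hd : 0 < d)
    (P : ℝ → Prop) [DecidablePred P]
    (hP : ∀ y ∈ Set.Icc (0:ℝ) 1, P y → d ≤ KGsup u p + c * (y - p) - u y)
    (h0 : ∀ y ∈ Set.Icc (0:ℝ) 1, u y ≤ KGsup u p + c * (y - p))
    {W₀ : ℝ} (hW₀ : 0 < W₀)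
    (hmass : ∀ (n : ℕ) (q w : Fin n → ℝ), (∀ i, q i ∈ Set.Icc (0:ℝ) 1) → (∀ i, 0 ≤ w i) →
      (∑ i, w i) = 1 → (∑ i, w i * q i) = p →
      W₀ ≤ ∑ i ∈ Finset.univ.filter (fun i => P (q i)), w i) : False := by
  have hub : ∀ v ∈ KGsplits u p, v ≤ KGsup u p - d * W₀ := by
    rintro v ⟨n, q, w, hq, hw, hw1, hmean, rfl⟩
    have hval : ∑ i, w i * (KGsup u p + c * (q i - p)) = KGsup u p := by
      calc ∑ i, w i * (KGsup u p + c * (q i - p))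
          = ∑ i, (w i * KGsup u p + c * (w i * q i) - c * p * w i) :=
            Finset.sum_congr rfl (fun i _ => by ring)
        _ = (∑ i, w i * KGsup u p) + c * (∑ i, w i * q i) - c * p * (∑ i, w i) := by
            rw [Finset.sum_sub_distrib, Finset.sum_add_distrib, ← Finset.mul_sum,
              ← Finset.mul_sum]
        _ = KGsup u p := by rw [← Finset.sum_mul, hw1, hmean]; ring
    have key : ∑ i ∈ Finset.univ.filter (fun i => P (q i)), (w i * d)
        ≤ ∑ i, (w i * (KGsup u p + c * (q i - p)) - w i * u (q i)) := by
      refine le_trans (Finset.sum_le_sum (fun i hi => ?_))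
        (Finset.sum_le_sum_of_subset_of_nonneg (Finset.subset_univ _) (fun i _ _ => ?_))
      · have hPi : P (q i) := (Finset.mem_filter.mp hi).2
        have h1 := hP (q i) (hq i) hPi
        have hwi := hw i
        nlinarith
      · have h1 := h0 (q i) (hq i)
        have hwi := hw i
        nlinarith
    rw [Finset.sum_sub_distrib, hval] at key
    have hdW : ∑ i ∈ Finset.univ.filter (fun i => P (q i)), (w i * d)
        = d * ∑ i ∈ Finset.univ.filter (fun i => P (q i)), w i := by
      rw [Finset.mul_sum]; exact Finset.sum_congr rfl (fun i _ => mul_comm _ _)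
    have hm := hmass n q w hq hw hw1 hmean
    have h2 : d * W₀ ≤ d * ∑ i ∈ Finset.univ.filter (fun i => P (q i)), w i :=
      mul_le_mul_of_nonneg_left hm hd.le
    linarith
  have hfin : KGsup u p ≤ KGsup u p - d * W₀ := csSup_le (KG_nonempty hpI) hub
  nlinarith

lemma KG_mass_right {p η : ℝ} (hη : 0 < η) (hp1 : p ≤ 1)
    (n : ℕ) (q w : Fin n → ℝ) (hq : ∀ i, q i ∈ Set.Icc (0:ℝ) 1) (hw : ∀ i, 0 ≤ w i)
    (hw1 : (∑ i, w i) = 1) (hmean : (∑ i, w i * q i) = p) :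
    η / (1 - p + η) ≤ ∑ i ∈ Finset.univ.filter (fun i => p - η ≤ q i), w i := by
  classical
  set W := ∑ i ∈ Finset.univ.filter (fun i => p - η ≤ q i), w i with hW
  have hden : (0:ℝ) < 1 - p + η := by linarith
  have hsplit := Finset.sum_filter_add_sum_filter_not Finset.univ
    (fun i => p - η ≤ q i) (fun i => w i * q i)
  have hwsplit := Finset.sum_filter_add_sum_filter_not Finset.univ
    (fun i => p - η ≤ q i) w
  have h1 : ∑ i ∈ Finset.univ.filter (fun i => p - η ≤ q i), w i * q i ≤ W :=
    Finset.sum_le_sum (fun i _ => mul_le_of_le_one_right (hw i) (hq i).2)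
  have h2 : ∑ i ∈ Finset.univ.filter (fun i => ¬ (p - η ≤ q i)), w i * q i
      ≤ (1 - W) * (p - η) := by
    have hWc : ∑ i ∈ Finset.univ.filter (fun i => ¬ (p - η ≤ q i)), w i = 1 - W := by
      rw [hw1] at hwsplit; linarith
    calc ∑ i ∈ Finset.univ.filter (fun i => ¬ (p - η ≤ q i)), w i * q i
        ≤ ∑ i ∈ Finset.univ.filter (fun i => ¬ (p - η ≤ q i)), w i * (p - η) :=
          Finset.sum_le_sum (fun i hi => mul_le_mul_of_nonneg_left
            (not_le.mp (Finset.mem_filter.mp hi).2).le (hw i))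
      _ = (1 - W) * (p - η) := by rw [← Finset.sum_mul, hWc]
  rw [hmean] at hsplit
  have h3 : η ≤ W * (1 - p + η) := by nlinarith
  rw [div_le_iff₀ hden]
  linarith

lemma KG_mass_left {p η : ℝ} (hη : 0 < η) (hp0 : 0 ≤ p)
    (n : ℕ) (q w : Fin n → ℝ) (hq : ∀ i, q i ∈ Set.Icc (0:ℝ) 1) (hw : ∀ i, 0 ≤ w i)
    (hw1 : (∑ i, w i) = 1) (hmean : (∑ i, w i * q i) = p) :
    η / (p + η) ≤ ∑ i ∈ Finset.univ.filter (fun i => q i ≤ p + η), w i := by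
  classical
  set W := ∑ i ∈ Finset.univ.filter (fun i => q i ≤ p + η), w i with hW
  have hden : (0:ℝ) < p + η := by linarith
  have hsplit := Finset.sum_filter_add_sum_filter_not Finset.univ
    (fun i => q i ≤ p + η) (fun i => w i * q i)
  have hwsplit := Finset.sum_filter_add_sum_filter_not Finset.univ
    (fun i => q i ≤ p + η) w
  have h1 : (0:ℝ) ≤ ∑ i ∈ Finset.univ.filter (fun i => q i ≤ p + η), w i * q i :=
    Finset.sum_nonneg (fun i _ => mul_nonneg (hw i) (hq i).1)
  have h2 : (1 - W) * (p + η)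
      ≤ ∑ i ∈ Finset.univ.filter (fun i => ¬ (q i ≤ p + η)), w i * q i := by
    have hWc : ∑ i ∈ Finset.univ.filter (fun i => ¬ (q i ≤ p + η)), w i = 1 - W := by
      rw [hw1] at hwsplit; linarith
    calc (1 - W) * (p + η)
        = ∑ i ∈ Finset.univ.filter (fun i => ¬ (q i ≤ p + η)), w i * (p + η) := by
          rw [← Finset.sum_mul, hWc]
      _ ≤ ∑ i ∈ Finset.univ.filter (fun i => ¬ (q i ≤ p + η)), w i * q i :=
          Finset.sum_le_sum (fun i hi => mul_le_mul_of_nonneg_left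
            (not_le.mp (Finset.mem_filter.mp hi).2).le (hw i))
  rw [hmean] at hsplit
  have h3 : η ≤ W * (p + η) := by nlinarith
  rw [div_le_iff₀ hden]
  linarith

lemma KG_attain {u : ℝ → ℝ} {M : ℝ} (husc : UpperSemicontinuousOn u (Set.Icc 0 1))
    (hM : ∀ q ∈ Set.Icc (0:ℝ) 1, |u q| ≤ M) {p : ℝ} (hp : p ∈ Set.Ioo (0:ℝ) 1) :
    ∃ q₁ q₂ γ : ℝ, q₁ ∈ Set.Icc (0:ℝ) 1 ∧ q₂ ∈ Set.Icc (0:ℝ) 1 ∧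
      γ ∈ Set.Icc (0:ℝ) 1 ∧ γ * q₁ + (1-γ) * q₂ = p ∧
      KGsup u p = γ * u q₁ + (1-γ) * u q₂ := by
  classical
  have hpI : p ∈ Set.Icc (0:ℝ) 1 := ⟨hp.1.le, hp.2.le⟩
  obtain ⟨c, hc⟩ := KG_support (KG_concave hM) hp
  -- the affine majorant:  u y ≤ KGsup u p + c * (y - p)  on [0,1]
  have h0 : ∀ y ∈ Set.Icc (0:ℝ) 1, u y ≤ KGsup u p + c * (y - p) :=
    fun y hy => (KG_le_sup hM hy).trans (hc y hy)
  -- lower semicontinuity of the gap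
  have hLSC : LowerSemicontinuousOn (fun x => KGsup u p + c * (x - p) - u x)
      (Set.Icc 0 1) := by
    have hneg : LowerSemicontinuousOn (fun x => -u x) (Set.Icc (0:ℝ) 1) := by
      intro x hx c' hc'
      dsimp only at hc'
      have h1 : u x < -c' := by linarith
      exact ((husc x hx) (-c') h1).mono (fun y hy => by dsimp only; linarith)
    have hcont : LowerSemicontinuousOn (fun x => KGsup u p + c * (x - p)) (Set.Icc (0:ℝ) 1) :=
      ((continuous_const.add (continuous_const.mul
        (continuous_id.sub continuous_const))).lowerSemicontinuous).lowerSemicontinuousOn _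
    simpa [sub_eq_add_neg] using hcont.add hneg
  -- minimisers on both sides
  obtain ⟨a, haI, hamin⟩ := KG_lsc_min (isCompact_Icc : IsCompact (Set.Icc 0 p))
    ⟨p, ⟨hp.1.le, le_refl p⟩⟩ (hLSC.mono (Set.Icc_subset_Icc le_rfl hp.2.le))
  obtain ⟨b, hbI, hbmin⟩ := KG_lsc_min (isCompact_Icc : IsCompact (Set.Icc p 1))
    ⟨p, ⟨le_refl p, hp.2.le⟩⟩ (hLSC.mono (Set.Icc_subset_Icc hp.1.le le_rfl))
  have haI1 : a ∈ Set.Icc (0:ℝ) 1 := ⟨haI.1, haI.2.trans hp.2.le⟩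
  have hbI1 : b ∈ Set.Icc (0:ℝ) 1 := ⟨hp.1.le.trans hbI.1, hbI.2⟩
  -- the gap vanishes at a
  have ha0 : u a = KGsup u p + c * (a - p) := by
    by_contra hne'
    have hδ : 0 < KGsup u p + c * (a - p) - u a := by
      rcases lt_or_eq_of_le (sub_nonneg.mpr (h0 a haI1)) with h | h
      · exact h
      · exact absurd (by linarith) hne'
    set δ := KGsup u p + c * (a - p) - u a with hδdef
    have hhp : δ ≤ KGsup u p + c * (p - p) - u p := hamin p ⟨hp.1.le, le_refl p⟩
    have hev : ∀ᶠ y in nhdsWithin p (Set.Icc 0 1),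
        δ / 2 < KGsup u p + c * (y - p) - u y :=
      (hLSC p hpI) (δ / 2) (by linarith)
    rw [Filter.eventually_iff, Metric.mem_nhdsWithin_iff] at hev
    obtain ⟨ε, hε, hsub⟩ := hev
    set η := ε / 2 with hη
    have hηpos : 0 < η := by positivity
    have hP : ∀ y ∈ Set.Icc (0:ℝ) 1, y ≤ p + η →
        δ / 2 ≤ KGsup u p + c * (y - p) - u y := by
      intro y hy hy'
      by_cases hyp : y ≤ p
      · have := hamin y ⟨hy.1, hyp⟩
        linarith
      · push_neg at hyp
        have hball : y ∈ Metric.ball p ε := by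
          rw [Metric.mem_ball, Real.dist_eq, abs_lt]
          constructor <;> [linarith; linarith]
        exact (hsub ⟨hball, hy⟩).le
    have hW₀ : (0:ℝ) < η / (p + η) := by
      apply div_pos hηpos; linarith [hp.1]
    exact KG_gap_contra hM hpI (half_pos hδ) (fun y => y ≤ p + η) hP h0 hW₀
      (fun n q w hq hw hw1 hmean => KG_mass_left hηpos hp.1.le n q w hq hw hw1 hmean)
  -- the gap vanishes at b
  have hb0 : u b = KGsup u p + c * (b - p) := by
    by_contra hne'
    have hδ : 0 < KGsup u p + c * (b - p) - u b := by
      rcases lt_or_eq_of_le (sub_nonneg.mpr (h0 b hbI1)) with h | h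
      · exact h
      · exact absurd (by linarith) hne'
    set δ := KGsup u p + c * (b - p) - u b with hδdef
    have hhp : δ ≤ KGsup u p + c * (p - p) - u p := hbmin p ⟨le_refl p, hp.2.le⟩
    have hev : ∀ᶠ y in nhdsWithin p (Set.Icc 0 1),
        δ / 2 < KGsup u p + c * (y - p) - u y :=
      (hLSC p hpI) (δ / 2) (by linarith)
    rw [Filter.eventually_iff, Metric.mem_nhdsWithin_iff] at hev
    obtain ⟨ε, hε, hsub⟩ := hev
    set η := ε / 2 with hη
    have hηpos : 0 < η := by positivity
    have hP : ∀ y ∈ Set.Icc (0:ℝ) 1, p - η ≤ y →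
        δ / 2 ≤ KGsup u p + c * (y - p) - u y := by
      intro y hy hy'
      by_cases hyp : p ≤ y
      · have := hbmin y ⟨hyp, hy.2⟩
        linarith
      · push_neg at hyp
        have hball : y ∈ Metric.ball p ε := by
          rw [Metric.mem_ball, Real.dist_eq, abs_lt]
          constructor <;> [linarith; linarith]
        exact (hsub ⟨hball, hy⟩).le
    have hW₀ : (0:ℝ) < η / (1 - p + η) := by
      apply div_pos hηpos; linarith [hp.2]
    exact KG_gap_contra hM hpI (half_pos hδ) (fun y => p - η ≤ y) hP h0 hW₀
      (fun n q w hq hw hw1 hmean => KG_mass_right hηpos hp.2.le n q w hq hw hw1 hmean)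
  -- assemble the two-point representation
  by_cases hab : a = b
  · have hap : a = p := le_antisymm haI.2 (hab ▸ hbI.1)
    refine ⟨p, p, 1, hpI, hpI, ⟨zero_le_one, le_refl 1⟩, by ring, ?_⟩
    have : u p = KGsup u p := by rw [← hap]; rw [ha0, hap]; ring
    rw [← this]; ring
  · have hba : a < b := lt_of_le_of_ne (haI.2.trans hbI.1) hab
    have hbapos : 0 < b - a := by linarith
    refine ⟨a, b, (b - p) / (b - a), haI1, hbI1,
      ⟨div_nonneg (by linarith [hbI.1]) hbapos.le,
        (div_le_one hbapos).mpr (by linarith [haI.2])⟩, ?_, ?_⟩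
    · field_simp
      ring
    · have hmean : (b - p) / (b - a) * a + (1 - (b - p) / (b - a)) * b = p := by
        field_simp
        ring
      rw [ha0, hb0]
      linear_combination (-c) * hmean

lemma KG_endpoint0 {u : ℝ → ℝ} {M : ℝ} (hM : ∀ q ∈ Set.Icc (0:ℝ) 1, |u q| ≤ M) :
    KGsup u 0 = u 0 := by
  refine le_antisymm (csSup_le (KG_nonempty ⟨le_refl 0, zero_le_one⟩) ?_)
    (le_csSup (KG_bddAbove hM) (KG_self_mem ⟨le_refl 0, zero_le_one⟩))
  rintro v ⟨n, q, w, hq, hw, hw1, hmean, rfl⟩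
  have hz : ∀ i ∈ Finset.univ, w i * q i = 0 :=
    (Finset.sum_eq_zero_iff_of_nonneg
      (fun i _ => mul_nonneg (hw i) (hq i).1)).mp hmean
  have : ∀ i ∈ Finset.univ, w i * u (q i) = w i * u 0 := by
    intro i _
    rcases mul_eq_zero.mp (hz i (Finset.mem_univ i)) with h | h
    · rw [h, zero_mul, zero_mul]
    · rw [h]
  rw [Finset.sum_congr rfl this, ← Finset.sum_mul, hw1, one_mul]

lemma KG_endpoint1 {u : ℝ → ℝ} {M : ℝ} (hM : ∀ q ∈ Set.Icc (0:ℝ) 1, |u q| ≤ M) :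
    KGsup u 1 = u 1 := by
  refine le_antisymm (csSup_le (KG_nonempty ⟨zero_le_one, le_refl 1⟩) ?_)
    (le_csSup (KG_bddAbove hM) (KG_self_mem ⟨zero_le_one, le_refl 1⟩))
  rintro v ⟨n, q, w, hq, hw, hw1, hmean, rfl⟩
  have hsum0 : ∑ i, w i * (1 - q i) = 0 := by
    have : ∑ i, w i * (1 - q i) = (∑ i, w i) - ∑ i, w i * q i := by
      rw [← Finset.sum_sub_distrib]
      exact Finset.sum_congr rfl (fun i _ => by ring)
    rw [this, hw1, hmean]; ring
  have hz : ∀ i ∈ Finset.univ, w i * (1 - q i) = 0 :=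
    (Finset.sum_eq_zero_iff_of_nonneg
      (fun i _ => mul_nonneg (hw i) (by linarith [(hq i).2]))).mp hsum0
  have : ∀ i ∈ Finset.univ, w i * u (q i) = w i * u 1 := by
    intro i _
    rcases mul_eq_zero.mp (hz i (Finset.mem_univ i)) with h | h
    · rw [h, zero_mul, zero_mul]
    · have : q i = 1 := by linarith
      rw [this]
  rw [Finset.sum_congr rfl this, ← Finset.sum_mul, hw1, one_mul]


/-- Kamenica–Gentzkow: the concave envelope equals the supremum of `∫ u dμ`
over finitely supported mean-`p` distributions of posteriors, and the
supremum is attained by a distribution supported on at most two points. -/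
theorem cav_eq_sup_over_splits (u : ℝ → ℝ)
    (husc : UpperSemicontinuousOn u (Set.Icc 0 1))
    (hbdd : ∃ M : ℝ, ∀ p ∈ Set.Icc (0:ℝ) 1, |u p| ≤ M) :
    ∀ p ∈ Set.Icc (0:ℝ) 1,
      (cavEnv u p = sSup {y : ℝ | ∃ (n : ℕ) (q : Fin n → ℝ) (wgt : Fin n → ℝ),
        (∀ i, q i ∈ Set.Icc (0:ℝ) 1) ∧ (∀ i, 0 ≤ wgt i) ∧
        (∑ i, wgt i) = 1 ∧ (∑ i, wgt i * q i) = p ∧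
        y = ∑ i, wgt i * u (q i)}) ∧
      (∃ q₁ q₂ γ : ℝ, q₁ ∈ Set.Icc (0:ℝ) 1 ∧ q₂ ∈ Set.Icc (0:ℝ) 1 ∧
        γ ∈ Set.Icc (0:ℝ) 1 ∧ γ * q₁ + (1-γ) * q₂ = p ∧
        cavEnv u p = γ * u q₁ + (1-γ) * u q₂) := by
  obtain ⟨M, hM⟩ := hbdd
  intro p hp
  have hcav : cavEnv u p = KGsup u p := KG_cav_eq hM hp
  constructor
  · exact hcav
  · rcases eq_or_lt_of_le hp.1 with h0 | h0
    · refine ⟨0, 0, 1, ⟨le_refl 0, zero_le_one⟩, ⟨le_refl 0, zero_le_one⟩,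
        ⟨zero_le_one, le_refl 1⟩, by rw [← h0]; ring, ?_⟩
      rw [← h0] at hcav ⊢
      rw [hcav, KG_endpoint0 hM]; ring
    rcases eq_or_lt_of_le hp.2 with h1 | h1
    · refine ⟨1, 1, 1, ⟨zero_le_one, le_refl 1⟩, ⟨zero_le_one, le_refl 1⟩,
        ⟨zero_le_one, le_refl 1⟩, by rw [h1]; ring, ?_⟩
      rw [h1] at hcav ⊢
      rw [hcav, KG_endpoint1 hM]; ring
    · obtain ⟨q₁, q₂, γ, h₁, h₂, h₃, h₄, h₅⟩ := KG_attain husc hM ⟨h0, h1⟩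
      exact ⟨q₁, q₂, γ, h₁, h₂, h₃, h₄, by rw [hcav, h₅]⟩
end
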